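/- arXiv:1909.10844 — 2 statements merged into one kernel-verified Lean document; each statement's English description precedes it below -/
import Mathlib

section
/- For all integers k ≥ 2 and n ≥ 1, the number p_{k,n} = 2^{2n+k} − 3·2^{n+k−1} + 2^k − 3 is odd and B_{p_{k,n}}(t) ≡ 1 (mod 2), i.e. the image of B_{p_{k,n}}(t) under the coefficientwise reduction map ℤ[t] → (ℤ/2ℤ)[t] is the constant polynomial 1. -/
open Polynomial

/-- The Stern polynomials: `B 0 = 0`, `B 1 = 1`, `B (2n) = t * B n`,
`B (2n+1) = B n + B (n+1)`. -/
noncomputable def sternPoly : ℕ → Polynomial ℤ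
  | 0 => 0
  | 1 => 1
  | n + 2 =>
    if h : (n + 2) % 2 = 0 then X * sternPoly ((n + 2) / 2)
    else sternPoly ((n + 2) / 2) + sternPoly ((n + 2) / 2 + 1)
decreasing_by all_goals omega

/-- `p k n = 2^(2n+k) - 3·2^(n+k-1) + 2^k - 3`. -/
def pSeq (k n : ℕ) : ℕ := 2 ^ (2 * n + k) - 3 * 2 ^ (n + k - 1) + 2 ^ k - 3

lemma stern_even' (m : ℕ) : sternPoly (2 * (m+1)) = X * sternPoly (m+1) := by
  show sternPoly (2*m + 2) = _
  rw [sternPoly]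
  have h1 : (2*m+2) % 2 = 0 := by omega
  have h2 : (2*m+2) / 2 = m + 1 := by omega
  simp [h1, h2]

lemma stern_odd' (m : ℕ) : sternPoly (2 * (m+1) + 1) = sternPoly (m+1) + sternPoly (m+2) := by
  show sternPoly (2*m + 1 + 2) = _
  rw [sternPoly]
  have h1 : (2*m+1+2) % 2 = 1 := by omega
  have h2 : (2*m+1+2) / 2 = m + 1 := by omega
  simp [h1, h2]

/-- Stern polynomial mod 2. -/
noncomputable def sf (n : ℕ) : Polynomial (ZMod 2) :=
  (sternPoly n).map (Int.castRingHom (ZMod 2))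

/-- Geometric sum `1 + X + ... + X^(m-1)` over `ZMod 2`. -/
noncomputable def sS (m : ℕ) : Polynomial (ZMod 2) := ∑ i ∈ Finset.range m, X ^ i

lemma two_eq_zero' : (2 : Polynomial (ZMod 2)) = 0 := by
  rw [show (2 : Polynomial (ZMod 2)) = C 2 from (map_ofNat (C : ZMod 2 →+* _) 2).symm,
    show (2 : ZMod 2) = 0 from rfl, map_zero]

lemma sf_zero : sf 0 = 0 := by simp [sf, sternPoly]
lemma sf_one : sf 1 = 1 := by simp [sf, sternPoly]

lemma sf_even (m : ℕ) : sf (2 * m) = X * sf m := by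
  cases m with
  | zero => simp [sf, sternPoly]
  | succ r => simp [sf, stern_even', Polynomial.map_mul]

lemma sf_odd (m : ℕ) : sf (2 * m + 1) = sf m + sf (m + 1) := by
  cases m with
  | zero => simp [sf, sternPoly]
  | succ r => simp [sf, stern_odd', Polynomial.map_add]

lemma sS_succ (m : ℕ) : sS (m + 1) = sS m + X ^ m := Finset.sum_range_succ _ _

lemma sS_succ' (m : ℕ) : sS (m + 1) = 1 + X * sS m := by
  rw [sS, Finset.sum_range_succ']
  simp [pow_succ, Finset.mul_sum, sS, add_comm, mul_comm]

lemma sf_pow (j : ℕ) : sf (2 ^ j) = X ^ j := by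
  induction j with
  | zero => simpa using sf_one
  | succ r ih =>
      have h : 2 ^ (r + 1) = 2 * 2 ^ r := by ring
      rw [h, sf_even, ih, pow_succ]; ring

lemma sf_ones (m : ℕ) : sf (2 ^ (m + 1) - 1) = sS (m + 1) := by
  induction m with
  | zero => simpa [sS] using sf_one
  | succ r ih =>
      have h1 : 1 ≤ 2 ^ (r + 1) := Nat.one_le_two_pow
      have h : 2 ^ (r + 2) - 1 = 2 * (2 ^ (r + 1) - 1) + 1 := by
        have : 2 ^ (r + 2) = 2 * 2 ^ (r + 1) := by ring
        omega
      have h' : 2 ^ (r + 1) - 1 + 1 = 2 ^ (r + 1) := by omega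
      rw [h, sf_odd, ih, h', sf_pow, sS_succ (r+1)]

lemma sf_zeros (j M : ℕ) : sf (2 ^ j * M) = X ^ j * sf M := by
  induction j with
  | zero => simp
  | succ r ih =>
      have h : 2 ^ (r + 1) * M = 2 * (2 ^ r * M) := by ring
      rw [h, sf_even, ih, pow_succ]; ring

lemma sf_zeros1 (j M : ℕ) : sf (2 ^ j * M + 1) = sS j * sf M + sf (M + 1) := by
  induction j with
  | zero => simp [sS]
  | succ r ih =>
      have h : 2 ^ (r + 1) * M + 1 = 2 * (2 ^ r * M) + 1 := by ring
      rw [h, sf_odd, ih, sf_zeros, sS_succ]; ring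

lemma sf_ones_run (j N : ℕ) : sf (2 ^ j * N + (2 ^ j - 1)) = sf N + sS j * sf (N + 1) := by
  induction j with
  | zero => simp [sS]
  | succ r ih =>
      have h1 : 1 ≤ 2 ^ r := Nat.one_le_two_pow
      have h : 2 ^ (r + 1) * N + (2 ^ (r + 1) - 1) = 2 * (2 ^ r * N + (2 ^ r - 1)) + 1 := by
        have e1 : 2 ^ (r + 1) = 2 * 2 ^ r := by ring
        have e2 : 2 ^ (r + 1) * N = 2 * (2 ^ r * N) := by ring
        omega
      have h' : 2 ^ r * N + (2 ^ r - 1) + 1 = 2 ^ r * (N + 1) := by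
        rw [Nat.mul_add, mul_one]; omega
      rw [h, sf_odd, ih, h', sf_zeros, sS_succ]; ring

lemma sf_C2 (m : ℕ) : sf (2 ^ (m + 2) - 2) = X * sS (m + 1) := by
  have h1 : 1 ≤ 2 ^ (m + 1) := Nat.one_le_two_pow
  have h : 2 ^ (m + 2) - 2 = 2 * (2 ^ (m + 1) - 1) := by
    have : 2 ^ (m + 2) = 2 * 2 ^ (m + 1) := by ring
    omega
  rw [h, sf_even, sf_ones]

lemma sf_C1 (m : ℕ) : sf (2 ^ (m + 2) - 3) = 1 := by
  cases m with
  | zero => simpa using sf_one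
  | succ r =>
      have h1 : 2 ≤ 2 ^ (r + 2) := by
        calc (2:ℕ) = 2 ^ 1 := by norm_num
        _ ≤ 2 ^ (r + 2) := Nat.pow_le_pow_right (by norm_num) (by omega)
      have h : 2 ^ (r + 3) - 3 = 2 * (2 ^ (r + 2) - 2) + 1 := by
        have : 2 ^ (r + 3) = 2 * 2 ^ (r + 2) := by ring
        omega
      have h' : 2 ^ (r + 2) - 2 + 1 = 2 ^ (r + 2) - 1 := by omega
      rw [h, sf_odd, sf_C2, h', sf_ones]
      have hs : sS (r + 2) = 1 + X * sS (r + 1) := sS_succ' _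
      linear_combination hs + (X * sS (r+1)) * two_eq_zero'

lemma geom_two (m : ℕ) : (1 + X) * sS m = 1 + X ^ m := by
  induction m with
  | zero => simp [sS]; linear_combination -two_eq_zero'
  | succ r ih =>
      have hS := sS_succ r
      linear_combination ((1:Polynomial (ZMod 2)) + X) * hS + ih + X ^ r * two_eq_zero'

theorem stern_p_odd_and_one_mod_two (k n : ℕ) (hk : 2 ≤ k) (hn : 1 ≤ n) :
    Odd (pSeq k n) ∧
      (sternPoly (pSeq k n)).map (Int.castRingHom (ZMod 2)) = 1 := by
  obtain ⟨m, rfl⟩ : ∃ m, n = m + 1 := ⟨n - 1, by omega⟩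
  obtain ⟨j, rfl⟩ : ∃ j, k = j + 2 := ⟨k - 2, by omega⟩
  set A : ℕ := 2 ^ (m + 2) - 3 with hA_def
  set N₂ : ℕ := 2 ^ m * A with hN2_def
  set N₃ : ℕ := 2 ^ j * N₂ + (2 ^ j - 1) with hN3_def
  have hA3 : 3 ≤ 2 ^ (m + 2) := by
    calc (3:ℕ) ≤ 2 ^ 2 := by norm_num
    _ ≤ 2 ^ (m + 2) := Nat.pow_le_pow_right (by norm_num) (by omega)
  have hbj : 1 ≤ 2 ^ j := Nat.one_le_two_pow
  -- arithmetic: pSeq (j+2) (m+1) = 2*(2*N₃)+1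
  have he1 : 2 * (m + 1) + (j + 2) = 2 * m + j + 4 := by ring
  have he2 : (m + 1) + (j + 2) - 1 = m + j + 2 := by omega
  have hs1 : 3 * 2 ^ (m + j + 2) ≤ 2 ^ (2 * m + j + 4) := by
    calc 3 * 2 ^ (m + j + 2) ≤ 2 ^ (m + 2) * 2 ^ (m + j + 2) :=
          Nat.mul_le_mul_right _ hA3
    _ = 2 ^ (2 * m + j + 4) := by rw [← pow_add]; congr 1; omega
  have h4 : 4 ≤ 2 ^ (j + 2) := by
    calc (4:ℕ) = 2 ^ 2 := by norm_num
    _ ≤ 2 ^ (j + 2) := Nat.pow_le_pow_right (by norm_num) (by omega)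
  have hs2 : 3 ≤ 2 ^ (2 * m + j + 4) - 3 * 2 ^ (m + j + 2) + 2 ^ (j + 2) := by omega
  have hp : pSeq (j + 2) (m + 1) = 2 * (2 * N₃) + 1 := by
    rw [pSeq, he1, he2, hN3_def, hN2_def, hA_def]
    zify [hA3, hbj, hs1, hs2]
    ring
  -- the polynomial values
  have hfA : sf A = 1 := sf_C1 m
  have hA1 : A + 1 = 2 ^ (m + 2) - 2 := by omega
  have hfA1 : sf (A + 1) = X * sS (m + 1) := by rw [hA1]; exact sf_C2 m
  have hfN2 : sf N₂ = X ^ m := by rw [hN2_def, sf_zeros, hfA, mul_one]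
  have hfN21 : sf (N₂ + 1) = sS m + X * sS (m + 1) := by
    rw [hN2_def, sf_zeros1, hfA, hfA1, mul_one]
  have hfN3 : sf N₃ = X ^ m + sS j * (sS m + X * sS (m + 1)) := by
    rw [hN3_def, sf_ones_run, hfN2, hfN21]
  have hN31 : N₃ + 1 = 2 ^ j * (N₂ + 1) := by
    rw [hN3_def, Nat.mul_add, mul_one]; omega
  have hfN31 : sf (N₃ + 1) = X ^ j * (sS m + X * sS (m + 1)) := by
    rw [hN31, sf_zeros, hfN21]
  have hB : sS m + X * sS (m + 1) = 1 + X ^ m + X ^ (m + 1) := by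
    have h1 := sS_succ m
    have h2 := sS_succ' m
    linear_combination X * h1 + h1 - h2 + (sS m - 1) * two_eq_zero'
  have hfp : sf (pSeq (j + 2) (m + 1)) = 1 := by
    rw [hp, sf_odd, sf_even, sf_odd, hfN3, hfN31]
    have g := geom_two j
    linear_combination (sS m + X * sS (m+1)) * g + hB
      + (X ^ m + X ^ (m+1) + X ^ j * (sS m + X * sS (m+1))) * two_eq_zero'
  exact ⟨by rw [hp]; exact ⟨2 * N₃, by ring⟩, hfp⟩
end

section
/- For all integers k ≥ 3 and n ≥ 1, one has the polynomial identity B_{p_{k+1,n}}(t) = (t+1)·B_{p_{k,n}}(t) − t·B_{p_{k−1,n}}(t) in ℤ[t]. -/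
open Polynomial

lemma sternPoly_even (m : ℕ) : sternPoly (2 * m) = X * sternPoly m := by
  match m with
  | 0 => simp [sternPoly]
  | m + 1 =>
    rw [show 2 * (m + 1) = 2 * m + 2 by ring, sternPoly]
    rw [dif_pos (by omega : (2 * m + 2) % 2 = 0), show (2 * m + 2) / 2 = m + 1 by omega]

lemma sternPoly_odd (m : ℕ) : sternPoly (2 * m + 1) = sternPoly m + sternPoly (m + 1) := by
  match m with
  | 0 => simp [sternPoly]
  | m + 1 =>
    rw [show 2 * (m + 1) + 1 = (2 * m + 1) + 2 by ring, sternPoly]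
    rw [dif_neg (by omega : ¬ ((2 * m + 1 + 2) % 2 = 0)),
      show (2 * m + 1 + 2) / 2 = m + 1 by omega]

lemma key (s : ℕ) : sternPoly (16 * s + 13) =
    (X + 1) * sternPoly (8 * s + 5) - X * sternPoly (4 * s + 1) := by
  have e1 : sternPoly (16 * s + 13) = sternPoly (8 * s + 6) + sternPoly (8 * s + 7) := by
    have h := sternPoly_odd (8 * s + 6)
    rw [show 2 * (8 * s + 6) + 1 = 16 * s + 13 by ring, show 8 * s + 6 + 1 = 8 * s + 7 by ring] at h
    exact h
  have e2 : sternPoly (8 * s + 6) = X * sternPoly (4 * s + 3) := by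
    have h := sternPoly_even (4 * s + 3)
    rw [show 2 * (4 * s + 3) = 8 * s + 6 by ring] at h; exact h
  have e3 : sternPoly (8 * s + 7) = sternPoly (4 * s + 3) + sternPoly (4 * s + 4) := by
    have h := sternPoly_odd (4 * s + 3)
    rw [show 2 * (4 * s + 3) + 1 = 8 * s + 7 by ring, show 4 * s + 3 + 1 = 4 * s + 4 by ring] at h
    exact h
  have e4 : sternPoly (8 * s + 5) = sternPoly (4 * s + 2) + sternPoly (4 * s + 3) := by
    have h := sternPoly_odd (4 * s + 2)
    rw [show 2 * (4 * s + 2) + 1 = 8 * s + 5 by ring, show 4 * s + 2 + 1 = 4 * s + 3 by ring] at h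
    exact h
  have e5 : sternPoly (4 * s + 4) = X * sternPoly (2 * s + 2) := by
    have h := sternPoly_even (2 * s + 2)
    rw [show 2 * (2 * s + 2) = 4 * s + 4 by ring] at h; exact h
  have e6 : sternPoly (4 * s + 3) = sternPoly (2 * s + 1) + sternPoly (2 * s + 2) := by
    have h := sternPoly_odd (2 * s + 1)
    rw [show 2 * (2 * s + 1) + 1 = 4 * s + 3 by ring, show 2 * s + 1 + 1 = 2 * s + 2 by ring] at h
    exact h
  have e7 : sternPoly (4 * s + 2) = X * sternPoly (2 * s + 1) := by
    have h := sternPoly_even (2 * s + 1)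
    rw [show 2 * (2 * s + 1) = 4 * s + 2 by ring] at h; exact h
  have e8 : sternPoly (4 * s + 1) = sternPoly (2 * s) + sternPoly (2 * s + 1) := by
    have h := sternPoly_odd (2 * s)
    rw [show 2 * (2 * s) + 1 = 4 * s + 1 by ring] at h; exact h
  have e9 : sternPoly (2 * s + 2) = X * sternPoly (s + 1) := by
    have h := sternPoly_even (s + 1)
    rw [show 2 * (s + 1) = 2 * s + 2 by ring] at h; exact h
  have e10 : sternPoly (2 * s) = X * sternPoly s := sternPoly_even s
  have e11 : sternPoly (2 * s + 1) = sternPoly s + sternPoly (s + 1) := sternPoly_odd s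
  rw [e1, e2, e3, e4, e5, e6, e7, e8, e9, e10, e11]
  ring

lemma pSeq_arith (k n : ℕ) (hk : 3 ≤ k) (hn : 1 ≤ n) :
    ∃ s, pSeq (k - 1) n = 4 * s + 1 ∧ pSeq k n = 8 * s + 5 ∧ pSeq (k + 1) n = 16 * s + 13 := by
  obtain ⟨k', rfl⟩ : ∃ k', k = k' + 3 := ⟨k - 3, by omega⟩
  obtain ⟨n', rfl⟩ : ∃ n', n = n' + 1 := ⟨n - 1, by omega⟩
  unfold pSeq
  have h1 : 2 ^ (2 * (n' + 1) + (k' + 3 - 1)) = 16 * (2 ^ n' * 2 ^ (n' + k')) := by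
    rw [show 2 * (n' + 1) + (k' + 3 - 1) = n' + (n' + k') + 4 by omega, pow_add, pow_add]; ring
  have h2 : 2 ^ (2 * (n' + 1) + (k' + 3)) = 32 * (2 ^ n' * 2 ^ (n' + k')) := by
    rw [show 2 * (n' + 1) + (k' + 3) = n' + (n' + k') + 5 by omega, pow_add, pow_add]; ring
  have h3 : 2 ^ (2 * (n' + 1) + (k' + 3 + 1)) = 64 * (2 ^ n' * 2 ^ (n' + k')) := by
    rw [show 2 * (n' + 1) + (k' + 3 + 1) = n' + (n' + k') + 6 by omega, pow_add, pow_add]; ring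
  have h4 : 2 ^ (n' + 1 + (k' + 3 - 1) - 1) = 4 * 2 ^ (n' + k') := by
    rw [show n' + 1 + (k' + 3 - 1) - 1 = (n' + k') + 2 by omega, pow_add]; ring
  have h5 : 2 ^ (n' + 1 + (k' + 3) - 1) = 8 * 2 ^ (n' + k') := by
    rw [show n' + 1 + (k' + 3) - 1 = (n' + k') + 3 by omega, pow_add]; ring
  have h6 : 2 ^ (n' + 1 + (k' + 3 + 1) - 1) = 16 * 2 ^ (n' + k') := by
    rw [show n' + 1 + (k' + 3 + 1) - 1 = (n' + k') + 4 by omega, pow_add]; ring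
  have h7 : 2 ^ (k' + 3 - 1) = 4 * 2 ^ k' := by
    rw [show k' + 3 - 1 = k' + 2 by omega, pow_add]; ring
  have h8 : 2 ^ (k' + 3) = 8 * 2 ^ k' := by rw [pow_add]; ring
  have h9 : 2 ^ (k' + 3 + 1) = 16 * 2 ^ k' := by
    rw [show k' + 3 + 1 = k' + 4 by omega, pow_add]; ring
  rw [h1, h2, h3, h4, h5, h6, h7, h8, h9]
  have hb : 1 ≤ 2 ^ n' := Nat.one_le_two_pow
  have hc : 1 ≤ 2 ^ k' := Nat.one_le_two_pow
  have hx : 2 ^ (n' + k') ≤ 2 ^ n' * 2 ^ (n' + k') := Nat.le_mul_of_pos_left _ (by positivity)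
  have ha : 2 ^ k' ≤ 2 ^ (n' + k') := Nat.pow_le_pow_right (by norm_num) (by omega)
  exact ⟨4 * (2 ^ n' * 2 ^ (n' + k')) - 3 * 2 ^ (n' + k') + 2 ^ k' - 1, by omega, by omega, by omega⟩

theorem stern_p_recurrence (k n : ℕ) (hk : 3 ≤ k) (hn : 1 ≤ n) :
    sternPoly (pSeq (k + 1) n) =
      (X + 1) * sternPoly (pSeq k n) - X * sternPoly (pSeq (k - 1) n) := by
  obtain ⟨s, h1, h2, h3⟩ := pSeq_arith k n hk hn
  rw [h1, h2, h3]
  exact key s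
end
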